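/- Let S = {(0,0),(4,0),(0,4),(4,5),(5,4)} ⊂ ℝ² with the metric d((x₁,x₂),(y₁,y₂)) = |x₁−y₁| + |x₂−y₂|, and define T(x₁,x₂) = (x₁,0) if x₁ ≤ x₂ and T(x₁,x₂) = (0,x₂) if x₂ < x₁. Then there exists no m ∈ [0,1) such that d(Ta,Tb) ≤ m·d(a,b) for all a,b ∈ S; in particular, T is not a Banach contraction. -/

import Mathlib

noncomputable def l1dist (a b : ℝ × ℝ) : ℝ := |a.1 - b.1| + |a.2 - b.2|

noncomputable def Tmap (x : ℝ × ℝ) : ℝ × ℝ :=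
  if x.1 ≤ x.2 then (x.1, 0) else (0, x.2)

lemma not_exists_contraction_const_of_expanding_pair {α : Type*} (d : α → α → ℝ)
    (f : α → α) {s : Set α} {a b : α} (ha : a ∈ s) (hb : b ∈ s) (hpos : 0 < d a b)
    (hexp : d a b ≤ d (f a) (f b)) :
    ¬ ∃ m : ℝ, 0 ≤ m ∧ m < 1 ∧ ∀ x ∈ s, ∀ y ∈ s, d (f x) (f y) ≤ m * d x y := by
  rintro ⟨m, -, hm1, hm⟩
  have hlt : m * d a b < d a b := by nlinarith
  linarith [hm a ha b hb]

lemma Tmap_of_le {x : ℝ × ℝ} (h : x.1 ≤ x.2) : Tmap x = (x.1, 0) := if_pos h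

lemma Tmap_of_lt {x : ℝ × ℝ} (h : x.2 < x.1) : Tmap x = (0, x.2) := if_neg (not_le.mpr h)

theorem not_banach_contraction :
    ¬ ∃ m : ℝ, 0 ≤ m ∧ m < 1 ∧
      ∀ a ∈ ({(0,0), (4,0), (0,4), (4,5), (5,4)} : Set (ℝ × ℝ)),
        ∀ b ∈ ({(0,0), (4,0), (0,4), (4,5), (5,4)} : Set (ℝ × ℝ)),
          l1dist (Tmap a) (Tmap b) ≤ m * l1dist a b := by
  have hT₁ : Tmap (5, 4) = (0, 4) := Tmap_of_lt (by norm_num)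
  have hT₂ : Tmap (4, 5) = (4, 0) := Tmap_of_le (by norm_num)
  have hdist : l1dist (5, 4) (4, 5) = 2 := by norm_num [l1dist]
  have hdistT : l1dist (0, 4) (4, 0) = 8 := by norm_num [l1dist]
  refine not_exists_contraction_const_of_expanding_pair l1dist Tmap
    (a := (5, 4)) (b := (4, 5)) (by simp) (by simp) ?_ ?_
  · norm_num [hdist]
  · norm_num [hT₁, hT₂, hdist, hdistT]
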